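/- The greedy allocation stochastically dominates every feasible allocation in the tail-sum sense: for every feasible allocation x and every threshold t ∈ {1,…,T}, one has Σ_{j ≥ t} B*_j ≥ Σ_{j ≥ t} x_j. -/

import Mathlib

/-!
On an upper set `s` of classes, the greedy allocation places exactly `min B (∑ j ∈ s, C j)`:
adding the smallest class `a` of `s` to the upper set above it, of capacity `S`, changes this
amount from `min B S` to `min B (C a + S)`, and the difference is precisely the greedy amount at `a`.
Any feasible `x` places at most `B` in total and at most `∑ j ∈ s, C j` on `s`, so it is dominated.
-/

open Finset

theorem min_max_zero_sub_add_min {c : ℝ} (hc : 0 ≤ c) (B S : ℝ) :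
    min c (max 0 (B - S)) + min B S = min B (c + S) := by
  rcases le_total B S with h | h
  · rw [max_eq_left (by linarith), min_eq_right hc, min_eq_left h,
      min_eq_left (by linarith)]
    ring
  · rw [max_eq_right (by linarith), min_eq_right h, ← min_add_add_right, sub_add_cancel,
      min_comm]

section Greedy

variable {α : Type*} [LinearOrder α]

theorem IsUpperSet.erase_min {s : Finset α} {a : α} (hs : IsUpperSet (↑(insert a s) : Set α))
    (ha : ∀ x ∈ s, a < x) : IsUpperSet (↑s : Set α) := by
  intro x y hxy hx
  have hy : y ∈ insert a s := hs hxy (mem_insert_of_mem hx)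
  exact (mem_insert.mp hy).resolve_left ((ha x hx).trans_le hxy).ne'

variable [Fintype α]

noncomputable def greedyAlloc (C : α → ℝ) (B : ℝ) (i : α) : ℝ :=
  min (C i) (max 0 (B - ∑ j ∈ univ.filter (fun j => i < j), C j))

theorem IsUpperSet.eq_filter_lt_of_min {s : Finset α} {a : α}
    (hs : IsUpperSet (↑(insert a s) : Set α)) (ha : ∀ x ∈ s, a < x) :
    s = univ.filter (fun j => a < j) := by
  ext j
  simp only [mem_filter, mem_univ, true_and]
  refine ⟨ha j, fun hj => ?_⟩
  exact (mem_insert.mp (hs hj.le (mem_insert_self a s))).resolve_left hj.ne'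

theorem sum_greedyAlloc_of_isUpperSet {C : α → ℝ} (hC : ∀ i, 0 ≤ C i) {B : ℝ} (hB : 0 ≤ B)
    (s : Finset α) (hs : IsUpperSet (↑s : Set α)) :
    ∑ j ∈ s, greedyAlloc C B j = min B (∑ j ∈ s, C j) := by
  classical
  induction s using Finset.induction_on_min with
  | empty => simp [min_eq_right hB]
  | insert a s ha ih =>
    have has : a ∉ s := fun h => (ha a h).false
    rw [sum_insert has, sum_insert has, ih (hs.erase_min ha), greedyAlloc,
      ← hs.eq_filter_lt_of_min ha]
    exact min_max_zero_sub_add_min (hC a) B _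

theorem sum_le_sum_greedyAlloc_of_isUpperSet {C : α → ℝ} (hC : ∀ i, 0 ≤ C i) {B : ℝ}
    (hB : 0 ≤ B) {x : α → ℝ} (hx : ∀ i, 0 ≤ x i ∧ x i ≤ C i) (hxB : ∑ i, x i = B)
    (s : Finset α) (hs : IsUpperSet (↑s : Set α)) :
    ∑ j ∈ s, x j ≤ ∑ j ∈ s, greedyAlloc C B j := by
  rw [sum_greedyAlloc_of_isUpperSet hC hB s hs]
  refine le_min ?_ (sum_le_sum fun j _ => (hx j).2)
  rw [← hxB]
  exact sum_le_sum_of_subset_of_nonneg (subset_univ s) fun j _ _ => (hx j).1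

end Greedy

open Finset in
theorem greedy_allocation_tail_dominance_general
    (T : ℕ) (C : Fin T → ℝ)
    (hC : ∀ i, 0 ≤ C i)
    (B : ℝ) (hB0 : 0 ≤ B)
    (Bstar : Fin T → ℝ)
    (hBstar : ∀ i, Bstar i =
      min (C i) (max 0 (B - ∑ j ∈ univ.filter (fun j => i < j), C j))) :
    ∀ x : Fin T → ℝ, (∀ i, 0 ≤ x i ∧ x i ≤ C i) → (∑ i, x i = B) →
      ∀ t : Fin T,
        ∑ j ∈ univ.filter (fun j => t ≤ j), x j ≤
        ∑ j ∈ univ.filter (fun j => t ≤ j), Bstar j := by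
  intro x hx hxB t
  have hgreedy : Bstar = greedyAlloc C B := funext hBstar
  have htail : IsUpperSet (↑(univ.filter (fun j => t ≤ j)) : Set (Fin T)) := by
    intro i j hij hi
    simp only [coe_filter, mem_univ, true_and, Set.mem_ofPred_eq] at hi ⊢
    exact hi.trans hij
  rw [hgreedy]
  exact sum_le_sum_greedyAlloc_of_isUpperSet hC hB0 hx hxB _ htail

open Finset in
/-- The greedy allocation stochastically dominates every
feasible allocation in the tail-sum sense: for every feasible x and every
threshold t, Σ_{j ≥ t} B*_j ≥ Σ_{j ≥ t} x_j. -/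
theorem greedy_allocation_tail_dominance
    (T : ℕ) (hT : 1 ≤ T) (k C : Fin T → ℝ)
    (hk : StrictMono k) (hC : ∀ i, 0 ≤ C i)
    (B : ℝ) (hB0 : 0 ≤ B) (hBle : B ≤ ∑ i, C i)
    (Bstar : Fin T → ℝ)
    (hBstar : ∀ i, Bstar i =
      min (C i) (max 0 (B - ∑ j ∈ univ.filter (fun j => i < j), C j))) :
    ∀ x : Fin T → ℝ, (∀ i, 0 ≤ x i ∧ x i ≤ C i) → (∑ i, x i = B) →
      ∀ t : Fin T,
        ∑ j ∈ univ.filter (fun j => t ≤ j), x j ≤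
        ∑ j ∈ univ.filter (fun j => t ≤ j), Bstar j :=
  greedy_allocation_tail_dominance_general T C hC B hB0 Bstar hBstar
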